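/- Let a ∈ ℂ[X] be a nonzero polynomial and k ∈ ℤ such that λ^{−k}·a(λ) is a nonnegative real number for every λ ∈ ℂ with |λ| = 1. Then every root of a lying on the unit circle has even multiplicity. -/

import Mathlib

/-!
Parametrize the circle near a root `z` of multiplicity `m` by `γ θ = z e^{iθ}`. Since
`γ θ - z ~ i z θ`, the nonnegative quantity `a(γ θ) γ(θ)^{-k}` is `θ^m` times a function tending
to `c = (i z)^m b(z) z^{-k} ≠ 0`, where `a = (X - z)^m b`. Dividing by `θ^m` and letting `θ → 0`
from the right gives `c ≥ 0`; from the left, if `m` were odd, `c ≤ 0`.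
-/

open Polynomial Filter Topology ComplexOrder

theorem eq_zero_of_tendsto_inv_odd_pow_smul_of_nonneg {E : Type*} [AddCommGroup E]
    [PartialOrder E] [IsOrderedAddMonoid E] [Module ℝ E] [PosSMulMono ℝ E] [TopologicalSpace E]
    [OrderClosedTopology E] {F : ℝ → E} {m : ℕ} (hm : Odd m) {w : E}
    (hF : ∀ᶠ θ in 𝓝[≠] 0, 0 ≤ F θ)
    (hw : Tendsto (fun θ : ℝ => (θ ^ m)⁻¹ • F θ) (𝓝[≠] 0) (𝓝 w)) : w = 0 := by
  have hright : 𝓝[>] (0 : ℝ) ≤ 𝓝[≠] 0 := nhdsWithin_mono _ fun _ hθ => ne_of_gt hθ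
  have hleft : 𝓝[<] (0 : ℝ) ≤ 𝓝[≠] 0 := nhdsWithin_mono _ fun _ hθ => ne_of_lt hθ
  refine le_antisymm ?_ ?_
  · refine le_of_tendsto (hw.mono_left hleft) ?_
    filter_upwards [hF.filter_mono hleft, self_mem_nhdsWithin] with θ hFθ hθ
    exact smul_nonpos_of_nonpos_of_nonneg (inv_nonpos.2 (hm.pow_neg hθ).le) hFθ
  · refine ge_of_tendsto (hw.mono_left hright) ?_
    filter_upwards [hF.filter_mono hright, self_mem_nhdsWithin] with θ hFθ hθ
    exact smul_nonneg (inv_nonneg.2 (pow_nonneg (le_of_lt hθ) m)) hFθ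

theorem Polynomial.tendsto_inv_pow_rootMultiplicity_smul_eval {𝕜 A : Type*}
    [NontriviallyNormedField 𝕜] [NormedField A] [NormedAlgebra 𝕜 A] (p : A[X])
    {γ : 𝕜 → A} {v : A} (hγ : HasDerivAt γ v 0) :
    Tendsto (fun t : 𝕜 => (t ^ rootMultiplicity (γ 0) p)⁻¹ • p.eval (γ t)) (𝓝[≠] 0)
      (𝓝 (v ^ rootMultiplicity (γ 0) p *
        (p /ₘ (X - C (γ 0)) ^ rootMultiplicity (γ 0) p).eval (γ 0))) := by
  set m := rootMultiplicity (γ 0) p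
  set q := p /ₘ (X - C (γ 0)) ^ m
  have hq : Tendsto (fun t => q.eval (γ t)) (𝓝[≠] 0) (𝓝 (q.eval (γ 0))) :=
    ((q.continuous.tendsto _).comp hγ.continuousAt).mono_left nhdsWithin_le_nhds
  refine ((hasDerivAt_iff_tendsto_slope.1 hγ).pow m |>.mul hq).congr fun t => ?_
  conv_rhs => rw [← p.pow_mul_divByMonic_rootMultiplicity_eq (γ 0)]
  simp only [slope_def_module, eval_mul, eval_pow, eval_sub, eval_X, eval_C]
  rw [_root_.smul_pow, inv_pow, smul_mul_assoc, sub_zero]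

theorem stmt_14 (a : ℂ[X]) (ha : a ≠ 0) (k : ℤ)
    (h : ∀ l : ℂ, ‖l‖ = 1 → ∃ r : ℝ, 0 ≤ r ∧ a.eval l = (r : ℂ) * l ^ k) :
    ∀ z : ℂ, ‖z‖ = 1 → a.IsRoot z → Even (rootMultiplicity z a) := by
  intro z hz _
  by_contra hodd
  rw [Nat.not_even_iff_odd] at hodd
  have hz0 : z ≠ 0 := ne_zero_of_norm_ne_zero (by simp [hz])
  set γ : ℝ → ℂ := fun θ => z * Complex.exp (θ * Complex.I)
  have hγ0 : γ 0 = z := by simp [γ]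
  have hγ : HasDerivAt γ (z * Complex.I) 0 := by
    simpa [γ] using ((hasDerivAt_id (0 : ℝ)).ofReal_comp.mul_const Complex.I).cexp.const_mul z
  have hγ_norm (θ : ℝ) : ‖γ θ‖ = 1 := by simp [γ, hz, Complex.norm_exp]
  have hnonneg (θ : ℝ) : 0 ≤ a.eval (γ θ) * γ θ ^ (-k) := by
    obtain ⟨r, hr, hval⟩ := h (γ θ) (hγ_norm θ)
    have hγθ : γ θ ≠ 0 := ne_zero_of_norm_ne_zero (by simp [hγ_norm])
    rw [hval, mul_assoc, ← zpow_add₀ hγθ, add_neg_cancel, zpow_zero, mul_one]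
    exact Complex.zero_le_real.2 hr
  have hzpow : Tendsto (fun θ => γ θ ^ (-k)) (𝓝[≠] 0) (𝓝 (z ^ (-k))) :=
    hγ0 ▸ (hγ.continuousAt.zpow₀ (-k) (Or.inl (hγ0 ▸ hz0))).tendsto.mono_left nhdsWithin_le_nhds
  have hlim := (a.tendsto_inv_pow_rootMultiplicity_smul_eval hγ).mul hzpow
  rw [hγ0] at hlim
  have hc := eq_zero_of_tendsto_inv_odd_pow_smul_of_nonneg hodd (.of_forall hnonneg)
    (hlim.congr fun θ => smul_mul_assoc _ _ _)
  exact mul_ne_zero (mul_ne_zero (pow_ne_zero _ (mul_ne_zero hz0 Complex.I_ne_zero))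
    (eval_divByMonic_pow_rootMultiplicity_ne_zero z ha)) (zpow_ne_zero _ hz0) hc
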